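/- arXiv:1704.02652 — 2 statements merged into one kernel-verified Lean document; each statement's English description precedes it below -/
import Mathlib

section
/- Let S = ((X,d), (f_i)_{i∈I}) be a φ-max-IFS with comparison function φ and p ∈ ℕ*. Then for all g, h ∈ C, d_u(G_S^{[p]}(g), G_S^{[p]}(h)) ≤ φ(max_{0 ≤ j ≤ p-1} d_u(G_S^{[j]}(g), G_S^{[j]}(h))). -/
open Filter Topology

/-- The shift-space metric on `Λ(I) = I^ℕ`. -/
noncomputable local instance shiftMetricSpace (I : Type*) : MetricSpace (ℕ → I) :=
  letI : TopologicalSpace I := ⊥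
  haveI : DiscreteTopology I := ⟨rfl⟩
  PiNat.metricSpace (E := fun _ => I)

/-- `wcomp f w = f_{w}` is the composition `f_{w₁} ∘ f_{w₂} ∘ ... ∘ f_{wₙ}` associated
to the word `w = w₁w₂...wₙ`, with `wcomp f [] = id`. -/
def wcomp {I X : Type*} (f : I → X → X) : List I → X → X
  | [] => id
  | i :: w => f i ∘ wcomp f w

/-- The map `G_{S,g}(ω) = f_{ω₁}(g(ω₂ω₃...))` associated to an IFS `(f_i)` and `g`. -/
def GS {I X : Type*} (f : I → X → X) (g : (ℕ → I) → X) : (ℕ → I) → X :=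
  fun ω => f (ω 0) (g fun n => ω (n + 1))

/-!
Unfolding the iterates, `(G_S^[n] g)(ω) = f_{ω₁…ωₙ}(g(σⁿω))`. At `ω`, the φ-max condition for the
word `ω₁…ω_p` and the points `x = g(σᵖω)`, `y = h(σᵖω)` bounds `d(G_S^[p] g ω, G_S^[p] h ω)` by `φ`
of a supremum over words `v` shorter than `p`. Each term `d(f_v x, f_v y)` is the distance between
`G_S^[|v|] g` and `G_S^[|v|] h` at the sequence `v σᵖω`, hence at most the maximum of the
`d_u(G_S^[j] g, G_S^[j] h)`, `j < p`, and monotonicity of `φ` concludes. The real suprema `d_u`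
are not junk values: iterates of continuous maps are continuous, hence bounded on the compact `Λ(I)`.
-/

section

variable {I X : Type*}

theorem GS_iterate_apply (f : I → X → X) (g : (ℕ → I) → X) (n : ℕ) (ω : ℕ → I) :
    (GS f)^[n] g ω = wcomp f (Stream'.take n ω) (g (Stream'.drop n ω)) := by
  induction n generalizing ω with
  | zero => rfl
  | succ n ih =>
    rw [Function.iterate_succ_apply']
    exact congrArg (f (ω 0)) (ih _)

theorem GS_iterate_length_append_stream (f : I → X → X) (g : (ℕ → I) → X) (v : List I)
    (τ : Stream' I) : (GS f)^[v.length] g (v ++ₛ τ) = wcomp f v (g τ) := by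
  have hv : Stream'.take v.length (v ++ₛ τ) = v := by
    rw [Stream'.take_append_of_le_length _ _ _ le_rfl, List.take_length]
  exact (GS_iterate_apply f g _ _).trans
    (congrArg₂ (fun w s => wcomp f w (g s)) hv (Stream'.drop_append_stream v τ))

variable [TopologicalSpace X] {f : I → X → X} {g : (ℕ → I) → X}

theorem continuous_GS (hf : ∀ i, Continuous (f i)) (hg : Continuous g) : Continuous (GS f g) := by
  -- `PiNat.metricSpace` keeps the product topology of discrete `I` up to defeq.
  let : TopologicalSpace I := ⊥
  have : DiscreteTopology I := ⟨rfl⟩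
  have hf' : Continuous fun q : I × X => f q.1 q.2 := continuous_prod_of_discrete_left.mpr hf
  have hsplit : Continuous fun ω : ℕ → I => (ω 0, g fun n => ω (n + 1)) :=
    (continuous_apply 0).prodMk <| hg.comp <| continuous_pi fun n => continuous_apply (n + 1)
  exact hf'.comp hsplit

theorem continuous_GS_iterate (hf : ∀ i, Continuous (f i)) (hg : Continuous g) (n : ℕ) :
    Continuous ((GS f)^[n] g) := by
  induction n with
  | zero => exact hg
  | succ n ih => simpa only [Function.iterate_succ_apply'] using continuous_GS hf ih

end

theorem dist_le_iSup_dist {α X : Type*} [TopologicalSpace α] [CompactSpace α]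
    [PseudoMetricSpace X] {u v : α → X} (hu : Continuous u) (hv : Continuous v) (a : α) :
    dist (u a) (v a) ≤ ⨆ b, dist (u b) (v b) :=
  le_ciSup (isCompact_range (hu.dist hv)).bddAbove a

/-- For a φ-max-IFS `S` with comparison function `φ` and exponent `p`, the operator
`G_S` satisfies `d_u(G_S^[p] g, G_S^[p] h) ≤ φ (max_{0 ≤ j ≤ p-1} d_u(G_S^[j] g, G_S^[j] h))`,
where `d_u` is the sup distance. -/
theorem GS_iterate_phi_max_contraction
    {I X : Type*} [MetricSpace X]
    (f : I → X → X) (hf : ∀ i, Continuous (f i))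
    (φ : ℝ → ℝ)
    (hφ0 : ∀ x, 0 ≤ x → 0 ≤ φ x)
    (hφmono : ∀ x y, 0 ≤ x → x ≤ y → φ x ≤ φ y)
    (p : ℕ) (hp : 1 ≤ p)
    (hifs : ∀ x y : X, ∀ w : List I, w.length = p →
      dist (wcomp f w x) (wcomp f w y) ≤
        φ (sSup {r : ℝ | ∃ v : List I, v.length < p ∧
            r = dist (wcomp f v x) (wcomp f v y)}))
    [CompactSpace (ℕ → I)] :
    ∀ g h : (ℕ → I) → X, Continuous g → Continuous h →
      (⨆ ω : ℕ → I, dist ((GS f)^[p] g ω) ((GS f)^[p] h ω)) ≤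
        φ ((Finset.range p).sup' (Finset.nonempty_range_iff.mpr (by omega))
            fun j => ⨆ ω : ℕ → I, dist ((GS f)^[j] g ω) ((GS f)^[j] h ω)) := by
  intro g h hg hh
  set d : ℕ → ℝ := fun j => ⨆ ω : ℕ → I, dist ((GS f)^[j] g ω) ((GS f)^[j] h ω)
  set M := (Finset.range p).sup' (Finset.nonempty_range_iff.mpr (by omega)) d
  have hdM : ∀ j < p, d j ≤ M := fun j hj => Finset.le_sup' d (Finset.mem_range.mpr hj)
  have hM : ∀ j < p, ∀ ω, dist ((GS f)^[j] g ω) ((GS f)^[j] h ω) ≤ M := fun j hj ω =>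
    (dist_le_iSup_dist (continuous_GS_iterate hf hg j) (continuous_GS_iterate hf hh j) ω).trans
      (hdM j hj)
  have hM0 : 0 ≤ M := (Real.iSup_nonneg fun _ => dist_nonneg).trans (hdM 0 hp)
  refine Real.iSup_le (fun ω => ?_) (hφ0 M hM0)
  rw [GS_iterate_apply, GS_iterate_apply]
  refine (hifs _ _ _ (Stream'.length_take p ω)).trans (hφmono _ _ ?_ ?_)
  · exact Real.sSup_nonneg (by rintro _ ⟨v, -, rfl⟩; exact dist_nonneg)
  · refine Real.sSup_le ?_ hM0
    rintro _ ⟨v, hv, rfl⟩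
    rw [← GS_iterate_length_append_stream, ← GS_iterate_length_append_stream]
    exact hM _ hv _
end

section
/- Every iterated function system consisting of convex contractions (IFSCC) is a φ-max-IFS: with p = 2 and φ(t) = (max_{i,j} d_{ij}) t, the inequality max_{ω ∈ Λ_2(I)} d(f_ω(x), f_ω(y)) ≤ φ(max_{ω ∈ V_2(I)} d(f_ω(x), f_ω(y))) holds for all x, y ∈ X. -/
open Filter Topology

section

variable {I X : Type*} [PseudoMetricSpace X]

theorem dist_comp_le_of_convex {g h : X → X} {a b c M : ℝ}
    (ha : 0 ≤ a) (hb : 0 ≤ b) (hc : 0 ≤ c) {x y : X}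
    (hconv : dist (g (h x)) (g (h y)) ≤
      a * dist x y + b * dist (g x) (g y) + c * dist (h x) (h y))
    (hxy : dist x y ≤ M) (hg : dist (g x) (g y) ≤ M) (hh : dist (h x) (h y) ≤ M) :
    dist (g (h x)) (g (h y)) ≤ (a + b + c) * M := by
  calc dist (g (h x)) (g (h y))
      ≤ a * dist x y + b * dist (g x) (g y) + c * dist (h x) (h y) := hconv
    _ ≤ a * M + b * M + c * M := by gcongr
    _ = (a + b + c) * M := by ring

theorem bddAbove_dist_wcomp_of_length_lt_two [Finite I] (f : I → X → X) (x y : X) :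
    BddAbove {r : ℝ | ∃ v : List I, v.length < 2 ∧ r = dist (wcomp f v x) (wcomp f v y)} := by
  refine (((Set.finite_range fun i => dist (f i x) (f i y)).insert (dist x y)).subset ?_).bddAbove
  rintro r ⟨v, hv, rfl⟩
  match v, hv with
  | [], _ => exact Set.mem_insert _ _
  | [i], _ => exact Set.mem_insert_of_mem _ ⟨i, rfl⟩

end

theorem ifscc_is_phi_max_ifs_general
    {I X : Type*} [Fintype I] [Nonempty I] [MetricSpace X]
    (f : I → X → X)
    (a b c : I → I → ℝ)
    (ha : ∀ i j, 0 ≤ a i j) (hb : ∀ i j, 0 ≤ b i j) (hc : ∀ i j, 0 ≤ c i j)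
    (hconv : ∀ i j : I, ∀ x y : X,
      dist (f i (f j x)) (f i (f j y)) ≤
        a i j * dist x y + b i j * dist (f i x) (f i y) + c i j * dist (f j x) (f j y)) :
    ∀ x y : X, ∀ w : List I, w.length = 2 →
      dist (wcomp f w x) (wcomp f w y) ≤
        ((Finset.univ ×ˢ Finset.univ).sup'
            (Finset.univ_nonempty.product Finset.univ_nonempty)
            fun q => a q.1 q.2 + b q.1 q.2 + c q.1 q.2) *
          sSup {r : ℝ | ∃ v : List I, v.length < 2 ∧
            r = dist (wcomp f v x) (wcomp f v y)} := by
  intro x y w hw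
  obtain ⟨i, j, rfl⟩ := List.length_eq_two.mp hw
  have hM : ∀ v : List I, v.length < 2 → dist (wcomp f v x) (wcomp f v y) ≤
      sSup {r : ℝ | ∃ v : List I, v.length < 2 ∧ r = dist (wcomp f v x) (wcomp f v y)} :=
    fun v hv => le_csSup (bddAbove_dist_wcomp_of_length_lt_two f x y) ⟨v, hv, rfl⟩
  have hij := dist_comp_le_of_convex (ha i j) (hb i j) (hc i j) (hconv i j x y)
    (hM [] (by simp)) (hM [i] (by simp)) (hM [j] (by simp))
  refine hij.trans (mul_le_mul_of_nonneg_right ?_ (dist_nonneg.trans (hM [] (by simp))))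
  exact Finset.le_sup' (fun q : I × I => a q.1 q.2 + b q.1 q.2 + c q.1 q.2)
    (Finset.mem_product.mpr ⟨Finset.mem_univ i, Finset.mem_univ j⟩ : (i, j) ∈ _)

/-- Every IFS consisting of convex contractions is a φ-max-IFS: with `p = 2` and
`φ(t) = (max_{i,j} d_{ij}) t`, the words of length `2` satisfy
`d(f_w(x), f_w(y)) ≤ φ (max_{v ∈ V₂(I)} d(f_v(x), f_v(y)))`. -/
theorem ifscc_is_phi_max_ifs
    {I X : Type*} [Fintype I] [Nonempty I] [MetricSpace X] [CompleteSpace X]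
    (f : I → X → X) (hf : ∀ i, Continuous (f i))
    (a b c : I → I → ℝ)
    (ha : ∀ i j, 0 ≤ a i j) (hb : ∀ i j, 0 ≤ b i j) (hc : ∀ i j, 0 ≤ c i j)
    (hlt : ((Finset.univ ×ˢ Finset.univ).sup'
        (Finset.univ_nonempty.product Finset.univ_nonempty)
        fun q => a q.1 q.2 + b q.1 q.2 + c q.1 q.2) < 1)
    (hconv : ∀ i j : I, ∀ x y : X,
      dist (f i (f j x)) (f i (f j y)) ≤
        a i j * dist x y + b i j * dist (f i x) (f i y) + c i j * dist (f j x) (f j y)) :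
    ∀ x y : X, ∀ w : List I, w.length = 2 →
      dist (wcomp f w x) (wcomp f w y) ≤
        ((Finset.univ ×ˢ Finset.univ).sup'
            (Finset.univ_nonempty.product Finset.univ_nonempty)
            fun q => a q.1 q.2 + b q.1 q.2 + c q.1 q.2) *
          sSup {r : ℝ | ∃ v : List I, v.length < 2 ∧
            r = dist (wcomp f v x) (wcomp f v y)} :=
  ifscc_is_phi_max_ifs_general f a b c ha hb hc hconv
end
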